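/- Assume S₁ = ∫_{−∞}^0 q(t)/r(t) dt = ∞ and S₂ = ∫_0^∞ q(t)/r(t) dt = ∞, and suppose there exists δ > 0 such that d(t) ≥ δ·d(x) whenever |t−x| ≤ d(x), for all x ∈ ℝ. If q(x) → 0 as x → −∞ or q(x) → 0 as x → +∞, then for every p ∈ [1,∞] the boundary value problem −r(x)y′(x)+q(x)y(x)=f(x), lim_{|x|→∞} y(x)=0, is not correctly solvable in L_p(ℝ). -/

import Mathlib

open MeasureTheory Filter Set Real
open scoped ENNReal NNReal

noncomputable section

/-- `y` is a solution of the boundary value problem `-r·y' + q·y = f` on `ℝ` with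
`y → 0` at `±∞`: `y` is continuous, locally absolutely continuous (encoded through the
integral identity, i.e. `y` is the integral of its a.e. derivative `(q·y - f)/r`),
and tends to `0` at both infinities. -/
def IsSolution (r q f y : ℝ → ℝ) : Prop :=
  Continuous y ∧
  (∀ a b : ℝ, y b - y a = ∫ t in a..b, (q t * y t - f t) / r t) ∧
  Tendsto y atBot (nhds 0) ∧ Tendsto y atTop (nhds 0)

/-- Correct solvability of the problem `-r·y' + q·y = f`, `y(±∞) = 0`, in `L_p(ℝ)`:
for every `f ∈ L_p(ℝ)` there is a unique solution `y ∈ L_p(ℝ)`, and the solution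
satisfies `‖y‖_p ≤ c‖f‖_p` with a constant `c ∈ (0,∞)` independent of `f`. -/
def CorrectlySolvableLp (r q : ℝ → ℝ) (p : ℝ≥0∞) : Prop :=
  ∃ c : ℝ≥0∞, 0 < c ∧ c < ⊤ ∧
    ∀ f : ℝ → ℝ, MemLp f p volume →
      (∃! y : ℝ → ℝ, IsSolution r q f y ∧ MemLp y p volume) ∧
      ∀ y : ℝ → ℝ, IsSolution r q f y → MemLp y p volume →
        eLpNorm y p volume ≤ c * eLpNorm f p volume

/-- Correct solvability of the problem `-r·y' + q·y = f`, `y(±∞) = 0`, in `C(ℝ)`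
(bounded continuous functions with the sup-norm): for every bounded continuous `f`
there is a unique solution `y` (such a solution is automatically bounded and
continuous), and `sup|y| ≤ c·sup|f|` with a constant `c ∈ (0,∞)` independent of `f`. -/
def CorrectlySolvableC (r q : ℝ → ℝ) : Prop :=
  ∃ c : ℝ, 0 < c ∧
    ∀ f : ℝ → ℝ, Continuous f → (∃ M : ℝ, ∀ x, |f x| ≤ M) →
      (∃! y : ℝ → ℝ, IsSolution r q f y) ∧
      ∀ y : ℝ → ℝ, IsSolution r q f y → ∀ x, |y x| ≤ c * ⨆ t, |f t|

/-- `S₁ = ∫_{-∞}^0 q(t)/r(t) dt`, as a (possibly infinite) lower Lebesgue integral. -/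
def S1E (r q : ℝ → ℝ) : ℝ≥0∞ :=
  ∫⁻ t in Set.Iio (0 : ℝ), ENNReal.ofReal (q t / r t)

/-- `S₂ = ∫_0^∞ q(t)/r(t) dt`, as a (possibly infinite) lower Lebesgue integral. -/
def S2E (r q : ℝ → ℝ) : ℝ≥0∞ :=
  ∫⁻ t in Set.Ioi (0 : ℝ), ENNReal.ofReal (q t / r t)

/-- The auxiliary function `d(x) = inf { d > 0 : ∫_{x-d}^{x+d} q(t)/r(t) dt = 2 }`. -/
def dfun (r q : ℝ → ℝ) (x : ℝ) : ℝ :=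
  sInf {d : ℝ | 0 < d ∧ (∫ t in (x - d)..(x + d), q t / r t) = 2}

/-!
With `Q x = ∫₀ˣ q/r`, the problem is solved by the Green function: if `f` vanishes near `+∞`,
then `y x = ∫ₓ^∞ exp (Q x - Q t) f t / r t dt` is a solution (it vanishes near `+∞`, and near
`-∞` it is a multiple of `exp Q → 0` since `S₁ = ∞`). Solutions are unique, since the
homogeneous solutions `C · exp Q` do not vanish at `+∞` unless `C = 0`.

Where `q → 0`, choose `x₀` with `q ≤ ε` on the window `[a, b] = [x₀ - d(x₀), x₀ + d(x₀)]`, on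
which `∫ q/r = 2`. For `f ≥ 1` on the window, `f ≥ q/ε` there and `Q x - Q t ≥ -4` for
`x ∈ [a - d(a), a]`, `t ∈ [a, b]`, so `y ≥ 2 e⁻⁴/ε` on `[a - d(a), a]`. Since `d(a) ≥ δ d(x₀)`,
this interval is at least `δ/2` times as long as the window, so `‖y‖ / ‖f‖ ≳ δ/ε` in every
`L_p`, and `ε` is arbitrary.
-/

theorem MeasureTheory.LocallyIntegrable.intervalIntegrable {φ : ℝ → ℝ}
    (hφ : LocallyIntegrable φ volume) (a b : ℝ) : IntervalIntegrable φ volume a b :=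
  (hφ.integrableOn_isCompact isCompact_uIcc).intervalIntegrable

theorem LipschitzOnWith.comp_absolutelyContinuousOnInterval {X Y : Type*} [PseudoMetricSpace X]
    [PseudoMetricSpace Y] {g : X → Y} {K : ℝ≥0} {s : Set X} {f : ℝ → X} {a b : ℝ}
    (hg : LipschitzOnWith K g s) (hf : AbsolutelyContinuousOnInterval f a b)
    (hfs : MapsTo f (uIcc a b) s) : AbsolutelyContinuousOnInterval (g ∘ f) a b := by
  unfold AbsolutelyContinuousOnInterval at hf ⊢
  refine squeeze_zero' (.of_forall fun _ => Finset.sum_nonneg fun _ _ => dist_nonneg) ?_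
    (by simpa using hf.const_mul (K : ℝ))
  rw [eventually_inf_principal]
  filter_upwards with E hE
  rw [Finset.mul_sum]
  gcongr with i hi
  exact hg.dist_le_mul _ (hfs (hE.1 i hi).1) _ (hfs (hE.1 i hi).2)

theorem AbsolutelyContinuousOnInterval.contDiff_comp {g f : ℝ → ℝ} {a b : ℝ}
    (hg : ContDiff ℝ 1 g) (hf : AbsolutelyContinuousOnInterval f a b) :
    AbsolutelyContinuousOnInterval (g ∘ f) a b := by
  obtain ⟨C, hC⟩ := hf.exists_bound
  obtain ⟨K, hK⟩ := hg.contDiffOn.exists_lipschitzOnWith one_ne_zero (convex_Icc (-C) C)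
    isCompact_Icc
  exact hK.comp_absolutelyContinuousOnInterval hf fun x hx => abs_le.mp (hC x hx)

theorem MeasureTheory.LocallyIntegrable.absolutelyContinuousOnInterval_intervalIntegral
    {φ : ℝ → ℝ} (hφ : LocallyIntegrable φ volume) (c a b : ℝ) :
    AbsolutelyContinuousOnInterval (fun x => ∫ t in c..x, φ t) a b := by
  set m := min (min a b) c
  set M := max (max a b) c
  have hmM : m ≤ M := by simp [m, M]
  refine ((hφ.intervalIntegrable m M).absolutelyContinuousOnInterval_intervalIntegral ?_).mono ?_
  · rw [uIcc_of_le hmM]; exact ⟨min_le_right _ _, le_max_right _ _⟩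
  · rw [uIcc_of_le hmM]; exact Icc_subset_Icc (min_le_left _ _) (le_max_left _ _)

theorem AbsolutelyContinuousOnInterval.integral_eq_sub_of_ae_hasDerivAt {u φ : ℝ → ℝ} {a b : ℝ}
    (hu : AbsolutelyContinuousOnInterval u a b)
    (hφ : ∀ᵐ x, x ∈ uIcc a b → HasDerivAt u (φ x) x) :
    ∫ x in a..b, φ x = u b - u a := by
  rw [← hu.integral_deriv_eq_sub]
  refine intervalIntegral.integral_congr_ae ?_
  filter_upwards [hφ] with x hx hx'
  exact (hx (uIoc_subset_uIcc hx')).deriv.symm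

theorem MeasureTheory.LocallyIntegrable.div_continuous {f r : ℝ → ℝ}
    (hf : LocallyIntegrable f volume) (hr : Continuous r) (hr0 : ∀ x, r x ≠ 0) :
    LocallyIntegrable (fun x => f x / r x) volume := by
  simpa only [div_eq_mul_inv, Pi.inv_apply] using hf.mul_continuous (hr.inv₀ hr0)

theorem eq_add_intervalIntegral_of_sub_eq_integral {u φ : ℝ → ℝ}
    (hu : ∀ a b, u b - u a = ∫ t in a..b, φ t) : u = fun x => u 0 + ∫ t in (0:ℝ)..x, φ t :=
  funext fun x => by linarith [hu 0 x]

theorem ae_hasDerivAt_of_sub_eq_integral {u φ : ℝ → ℝ} (hφ : LocallyIntegrable φ volume)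
    (hu : ∀ a b, u b - u a = ∫ t in a..b, φ t) : ∀ᵐ x, HasDerivAt u (φ x) x := by
  filter_upwards [_root_.LocallyIntegrable.ae_hasDerivAt_integral hφ] with x hx
  rw [eq_add_intervalIntegral_of_sub_eq_integral hu]
  exact (hx 0).const_add _

theorem absolutelyContinuousOnInterval_of_sub_eq_integral {u φ : ℝ → ℝ}
    (hφ : LocallyIntegrable φ volume) (hu : ∀ a b, u b - u a = ∫ t in a..b, φ t) (a b : ℝ) :
    AbsolutelyContinuousOnInterval u a b := by
  have := hφ.absolutelyContinuousOnInterval_intervalIntegral 0 a b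
  rw [eq_add_intervalIntegral_of_sub_eq_integral hu]
  unfold AbsolutelyContinuousOnInterval at this ⊢
  simpa only [dist_add_left] using this

theorem continuous_of_sub_eq_integral {u φ : ℝ → ℝ} (hφ : LocallyIntegrable φ volume)
    (hu : ∀ a b, u b - u a = ∫ t in a..b, φ t) : Continuous u := by
  rw [eq_add_intervalIntegral_of_sub_eq_integral hu]
  exact continuous_const.add (intervalIntegral.continuous_primitive hφ.intervalIntegrable 0)

section NonnegWeight

variable {w : ℝ → ℝ}

theorem monotone_intervalIntegral_of_nonneg (hw : LocallyIntegrable w volume)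
    (hw0 : ∀ t, 0 ≤ w t) (c : ℝ) : Monotone fun x => ∫ t in c..x, w t := fun x y hxy => by
  dsimp only
  have := intervalIntegral.integral_interval_sub_left (hw.intervalIntegrable c y)
    (hw.intervalIntegrable c x)
  linarith [intervalIntegral.integral_nonneg (μ := volume) hxy fun t _ => hw0 t]

theorem lintegral_Ioc_ofReal_eq_ofReal_intervalIntegral (hw : LocallyIntegrable w volume)
    (hw0 : ∀ t, 0 ≤ w t) {a b : ℝ} (hab : a ≤ b) :
    ∫⁻ t in Ioc a b, ENNReal.ofReal (w t) = ENNReal.ofReal (∫ t in a..b, w t) := by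
  rw [intervalIntegral.integral_of_le hab, ofReal_integral_eq_lintegral_ofReal
    ((hw.intervalIntegrable a b).1) (.of_forall hw0)]

theorem tendsto_intervalIntegral_atTop_of_lintegral_Ioi_eq_top (hw : LocallyIntegrable w volume)
    (hw0 : ∀ t, 0 ≤ w t) (h : ∫⁻ t in Ioi 0, ENNReal.ofReal (w t) = ⊤) :
    Tendsto (fun x => ∫ t in (0:ℝ)..x, w t) atTop atTop := by
  refine tendsto_atTop_atTop_of_monotone (monotone_intervalIntegral_of_nonneg hw hw0 0)
    fun K => ?_
  by_contra! hK
  have hunion : ⋃ n : ℕ, Ioc (0:ℝ) n = Ioi 0 :=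
    iUnion_Ioc_eq_Ioi_self_iff.mpr fun x _ => (exists_nat_ge x)
  rw [← hunion, setLIntegral_iUnion_of_directed _
    (Monotone.directed_le fun m n hmn => Ioc_subset_Ioc_right (by exact_mod_cast hmn))] at h
  refine ENNReal.ofReal_ne_top (r := K) (top_le_iff.mp (h ▸ iSup_le fun n => ?_))
  rw [lintegral_Ioc_ofReal_eq_ofReal_intervalIntegral hw hw0 n.cast_nonneg]
  exact ENNReal.ofReal_le_ofReal (hK n).le

theorem tendsto_intervalIntegral_atBot_of_lintegral_Iio_eq_top (hw : LocallyIntegrable w volume)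
    (hw0 : ∀ t, 0 ≤ w t) (h : ∫⁻ t in Iio 0, ENNReal.ofReal (w t) = ⊤) :
    Tendsto (fun x => ∫ t in (0:ℝ)..x, w t) atBot atBot := by
  refine tendsto_atBot_atBot_of_monotone (monotone_intervalIntegral_of_nonneg hw hw0 0)
    fun K => ?_
  by_contra! hK
  have hunion : ⋃ n : ℕ, Ioc (-(n:ℝ)) 0 = Iic 0 := by
    ext x
    simp only [mem_iUnion, mem_Ioc, mem_Iic, neg_lt, exists_and_right]
    exact ⟨And.right, fun hx => ⟨exists_nat_gt (-x), hx⟩⟩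
  rw [setLIntegral_congr Iio_ae_eq_Iic, ← hunion, setLIntegral_iUnion_of_directed _
    (Monotone.directed_le fun m n hmn => Ioc_subset_Ioc_left (by simpa using hmn))] at h
  refine ENNReal.ofReal_ne_top (r := -K) (top_le_iff.mp (h ▸ iSup_le fun n => ?_))
  rw [lintegral_Ioc_ofReal_eq_ofReal_intervalIntegral hw hw0 (by simp),
    intervalIntegral.integral_symm]
  exact ENNReal.ofReal_le_ofReal (by linarith [hK (-n)])

end NonnegWeight

theorem ofReal_mul_eLpNorm_indicator_one_le {α : Type*} [MeasurableSpace α] {μ : Measure α}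
    {p : ℝ≥0∞} (hp1 : 1 ≤ p) (hp : p ≠ ⊤) {s t : Set α} (hs : MeasurableSet s)
    (ht : MeasurableSet t) {κ β : ℝ} (hκ0 : 0 ≤ κ) (hκ1 : κ ≤ 1) (hβ : 0 ≤ β)
    (hst : ENNReal.ofReal κ * μ s ≤ μ t) {y : α → ℝ} (hy : ∀ x ∈ t, β ≤ |y x|) :
    ENNReal.ofReal (κ * β) * eLpNorm (s.indicator fun _ => (1:ℝ)) p μ ≤ eLpNorm y p μ := by
  have hp0 : p ≠ 0 := (zero_lt_one.trans_le hp1).ne'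
  have hγ0 : 0 ≤ 1 / p.toReal := by positivity
  have hγ1 : 1 / p.toReal ≤ 1 := div_le_one_of_le₀ (by
    simpa using ENNReal.toReal_mono hp hp1) ENNReal.toReal_nonneg
  calc ENNReal.ofReal (κ * β) * eLpNorm (s.indicator fun _ => (1:ℝ)) p μ
      = ENNReal.ofReal β * (ENNReal.ofReal κ ^ (1:ℝ) * μ s ^ (1 / p.toReal)) := by
        rw [eLpNorm_indicator_const hs hp0 hp, ENNReal.ofReal_mul hκ0, ENNReal.rpow_one]
        simp only [enorm_one, one_mul]
        ring
    _ ≤ ENNReal.ofReal β * (ENNReal.ofReal κ * μ s) ^ (1 / p.toReal) := by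
        rw [ENNReal.mul_rpow_of_nonneg _ _ hγ0]
        gcongr _ * (?_ * _)
        exact ENNReal.rpow_le_rpow_of_exponent_ge (ENNReal.ofReal_le_one.mpr hκ1) hγ1
    _ ≤ ‖β‖ₑ * μ t ^ (1 / p.toReal) := by
        rw [Real.enorm_eq_ofReal hβ]
        gcongr
    _ = eLpNorm (t.indicator fun _ => β) p μ := (eLpNorm_indicator_const ht hp0 hp).symm
    _ ≤ eLpNorm y p μ := eLpNorm_mono fun x => by
        by_cases hx : x ∈ t
        · simpa [indicator_of_mem hx, abs_of_nonneg hβ] using hy x hx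
        · simp [indicator_of_notMem hx]

def potential (r q : ℝ → ℝ) (x : ℝ) : ℝ := ∫ t in (0:ℝ)..x, q t / r t

section Potential

variable {r q : ℝ → ℝ}

theorem potential_sub (hw : LocallyIntegrable (fun t => q t / r t) volume) (a b : ℝ) :
    potential r q b - potential r q a = ∫ t in a..b, q t / r t :=
  intervalIntegral.integral_interval_sub_left (hw.intervalIntegrable 0 b)
    (hw.intervalIntegrable 0 a)

theorem continuous_potential (hw : LocallyIntegrable (fun t => q t / r t) volume) :
    Continuous (potential r q) :=
  intervalIntegral.continuous_primitive hw.intervalIntegrable 0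

theorem monotone_potential (hw : LocallyIntegrable (fun t => q t / r t) volume)
    (hw0 : ∀ t, 0 ≤ q t / r t) : Monotone (potential r q) :=
  monotone_intervalIntegral_of_nonneg hw hw0 0

theorem tendsto_potential_atTop (hw : LocallyIntegrable (fun t => q t / r t) volume)
    (hw0 : ∀ t, 0 ≤ q t / r t) (hS2 : S2E r q = ⊤) : Tendsto (potential r q) atTop atTop :=
  tendsto_intervalIntegral_atTop_of_lintegral_Ioi_eq_top hw hw0 hS2

theorem tendsto_potential_atBot (hw : LocallyIntegrable (fun t => q t / r t) volume)
    (hw0 : ∀ t, 0 ≤ q t / r t) (hS1 : S1E r q = ⊤) : Tendsto (potential r q) atBot atBot :=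
  tendsto_intervalIntegral_atBot_of_lintegral_Iio_eq_top hw hw0 hS1

theorem dfun_pos_and_potential_sub_eq_two (hw : LocallyIntegrable (fun t => q t / r t) volume)
    (hw0 : ∀ t, 0 ≤ q t / r t) (hS2 : S2E r q = ⊤) (x : ℝ) :
    0 < dfun r q x ∧
      potential r q (x + dfun r q x) - potential r q (x - dfun r q x) = 2 := by
  set F : ℝ → ℝ := fun d => potential r q (x + d) - potential r q (x - d)
  have hQ := monotone_potential hw hw0
  have hF : Continuous F := ((continuous_potential hw).comp (continuous_const_add x)).sub
    ((continuous_potential hw).comp (continuous_sub_left x))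
  -- `F ≤ 0` for `d ≤ 0`, so the set defining `dfun` is the closed level set `F ⁻¹' {2}`.
  have hset : {d : ℝ | 0 < d ∧ (∫ t in (x - d)..(x + d), q t / r t) = 2} = F ⁻¹' {2} := by
    ext d
    simp only [mem_ofPred_eq, mem_preimage, mem_singleton_iff, F, ← potential_sub hw]
    refine ⟨And.right, fun h => ⟨?_, h⟩⟩
    by_contra! hd
    linarith [hQ (by linarith : x + d ≤ x - d)]
  have hFtop : Tendsto F atTop atTop := by
    refine tendsto_atTop_mono' _ ?_ (tendsto_atTop_add_const_right _ (-potential r q x)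
      ((tendsto_potential_atTop hw hw0 hS2).comp (tendsto_atTop_add_const_left _ x tendsto_id)))
    filter_upwards [eventually_ge_atTop 0] with d hd
    simp only [Function.comp_apply, id, F]
    linarith [hQ (by linarith : x - d ≤ x)]
  obtain ⟨d, -, hd⟩ := intermediate_value_Ici hF.continuousOn hFtop
    (show (2:ℝ) ∈ Ici (F 0) by simp [F])
  have hmem : dfun r q x ∈ F ⁻¹' {2} := by
    rw [dfun, hset]
    exact (isClosed_singleton.preimage hF).csInf_mem ⟨d, hd⟩
      ⟨0, fun e he => (hset ▸ he : e ∈ {d : ℝ | 0 < d ∧ _}).1.le⟩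
  rw [← hset] at hmem
  exact ⟨hmem.1, by rw [potential_sub hw]; exact hmem.2⟩

end Potential

theorem intervalIntegral_sub_intervalIntegral_eq_integral_neg {g : ℝ → ℝ}
    (hg : LocallyIntegrable g volume) (T a b : ℝ) :
    (∫ t in b..T, g t) - (∫ t in a..T, g t) = ∫ t in a..b, -g t := by
  rw [intervalIntegral.integral_neg, ← intervalIntegral.integral_interval_sub_left
    (hg.intervalIntegrable a T) (hg.intervalIntegrable a b)]
  ring

/-- The solution `y x = ∫_x^∞ exp (Q x - Q t) f t / r t dt` given by the Green function, for `f`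
vanishing beyond `T`; here `Q = potential r q`. -/
def greenSolution (r q f : ℝ → ℝ) (T x : ℝ) : ℝ :=
  exp (potential r q x) * ∫ t in x..T, exp (-potential r q t) * (f t / r t)

section GreenSolution

variable {r q f : ℝ → ℝ} {T : ℝ}

theorem locallyIntegrable_exp_neg_potential_mul
    (hw : LocallyIntegrable (fun t => q t / r t) volume)
    (hf : LocallyIntegrable (fun t => f t / r t) volume) :
    LocallyIntegrable (fun t => exp (-potential r q t) * (f t / r t)) volume :=
  hf.continuous_mul (continuous_potential hw).neg.rexp

theorem continuous_greenSolution (hw : LocallyIntegrable (fun t => q t / r t) volume)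
    (hf : LocallyIntegrable (fun t => f t / r t) volume) :
    Continuous (greenSolution r q f T) :=
  (continuous_potential hw).rexp.mul <| continuous_of_sub_eq_integral
    (locallyIntegrable_exp_neg_potential_mul hw hf).neg
    (intervalIntegral_sub_intervalIntegral_eq_integral_neg
      (locallyIntegrable_exp_neg_potential_mul hw hf) T)

theorem greenSolution_sub_eq_integral (hw : LocallyIntegrable (fun t => q t / r t) volume)
    (hf : LocallyIntegrable (fun t => f t / r t) volume) (a b : ℝ) :
    greenSolution r q f T b - greenSolution r q f T a =
      ∫ t in a..b, (q t * greenSolution r q f T t - f t) / r t := by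
  have hg := locallyIntegrable_exp_neg_potential_mul hw hf
  have hG := intervalIntegral_sub_intervalIntegral_eq_integral_neg hg T
  have hQ := potential_sub hw
  refine ((((absolutelyContinuousOnInterval_of_sub_eq_integral hw hQ a b).contDiff_comp
    contDiff_exp).fun_mul (absolutelyContinuousOnInterval_of_sub_eq_integral hg.neg hG a b)
    ).integral_eq_sub_of_ae_hasDerivAt ?_).symm
  filter_upwards [ae_hasDerivAt_of_sub_eq_integral hw hQ,
    ae_hasDerivAt_of_sub_eq_integral hg.neg hG] with x hQx hGx _
  refine (hQx.exp.mul hGx).congr_deriv ?_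
  simp only [greenSolution, Pi.neg_apply, exp_neg]
  field_simp
  ring

theorem greenSolution_eq_zero (hfT : ∀ t, T < t → f t = 0) {x : ℝ} (hx : T ≤ x) :
    greenSolution r q f T x = 0 := by
  rw [greenSolution, intervalIntegral.integral_symm, intervalIntegral.integral_of_le hx,
    setIntegral_eq_zero_of_forall_eq_zero fun t ht => by simp [hfT t ht.1]]
  simp

theorem greenSolution_eq_exp_mul (hw : LocallyIntegrable (fun t => q t / r t) volume)
    (hf : LocallyIntegrable (fun t => f t / r t) volume) {s : ℝ} (hfs : ∀ t ≤ s, f t = 0)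
    {x : ℝ} (hx : x ≤ s) :
    greenSolution r q f T x =
      exp (potential r q x) * ∫ t in s..T, exp (-potential r q t) * (f t / r t) := by
  have hg := locallyIntegrable_exp_neg_potential_mul hw hf
  rw [greenSolution, ← intervalIntegral.integral_add_adjacent_intervals
    (hg.intervalIntegrable x s) (hg.intervalIntegrable s T), intervalIntegral.integral_of_le hx,
    setIntegral_eq_zero_of_forall_eq_zero fun t ht => by simp [hfs t ht.2], zero_add]

theorem greenSolution_isSolution (hw : LocallyIntegrable (fun t => q t / r t) volume)
    (hw0 : ∀ t, 0 ≤ q t / r t) (hS1 : S1E r q = ⊤)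
    (hf : LocallyIntegrable (fun t => f t / r t) volume) {s : ℝ} (hfs : ∀ t ≤ s, f t = 0)
    (hfT : ∀ t, T < t → f t = 0) : IsSolution r q f (greenSolution r q f T) := by
  refine ⟨continuous_greenSolution hw hf, greenSolution_sub_eq_integral hw hf, ?_, ?_⟩
  · have h0 : Tendsto (fun x => exp (potential r q x) *
        ∫ t in s..T, exp (-potential r q t) * (f t / r t)) atBot (nhds 0) := by
      simpa using (tendsto_exp_atBot.comp (tendsto_potential_atBot hw hw0 hS1)).mul_const
        (∫ t in s..T, exp (-potential r q t) * (f t / r t))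
    refine h0.congr' ?_
    filter_upwards [eventually_le_atBot s] with x hx
    exact (greenSolution_eq_exp_mul hw hf hfs hx).symm
  · exact tendsto_const_nhds.congr' <| (eventually_ge_atTop T).mono
      fun x hx => (greenSolution_eq_zero hfT hx).symm

theorem le_greenSolution (hrpos : ∀ x, 0 < r x)
    (hw : LocallyIntegrable (fun t => q t / r t) volume) (hw0 : ∀ t, 0 ≤ q t / r t)
    (hf : LocallyIntegrable (fun t => f t / r t) volume) (hf0 : ∀ t, 0 ≤ f t)
    {a b x ε : ℝ} (hε : 0 < ε) (hf1 : ∀ t ∈ Ioc a b, 1 ≤ f t) (hqε : ∀ t ∈ Ioc a b, q t ≤ ε)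
    (hxa : x ≤ a) (hab : a ≤ b) (hbT : b ≤ T) :
    exp (potential r q x - potential r q b) * ((potential r q b - potential r q a) / ε) ≤
      greenSolution r q f T x := by
  have hg := locallyIntegrable_exp_neg_potential_mul hw hf
  have hpointwise : ∀ t ∈ Ioo a b,
      exp (-potential r q b) / ε * (q t / r t) ≤ exp (-potential r q t) * (f t / r t) := by
    intro t ht
    have hqf : q t / ε ≤ f t := (div_le_one hε).mpr (hqε t (Ioo_subset_Ioc_self ht)) |>.trans
      (hf1 t (Ioo_subset_Ioc_self ht))
    calc exp (-potential r q b) / ε * (q t / r t)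
        = exp (-potential r q b) * (q t / ε / r t) := by ring
      _ ≤ exp (-potential r q t) * (f t / r t) :=
        mul_le_mul (exp_le_exp.mpr (neg_le_neg (monotone_potential hw hw0 ht.2.le)))
          (div_le_div_of_nonneg_right hqf (hrpos t).le)
          (by rw [div_right_comm]; exact div_nonneg (hw0 t) hε.le) (exp_pos _).le
  calc exp (potential r q x - potential r q b) * ((potential r q b - potential r q a) / ε)
      = exp (potential r q x) * ∫ t in a..b, exp (-potential r q b) / ε * (q t / r t) := by
        rw [intervalIntegral.integral_const_mul, ← potential_sub hw, sub_eq_add_neg, exp_add]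
        ring
    _ ≤ exp (potential r q x) * ∫ t in a..b, exp (-potential r q t) * (f t / r t) := by
        gcongr
        exact intervalIntegral.integral_mono_on_of_le_Ioo hab
          ((hw.intervalIntegrable a b).const_mul _) (hg.intervalIntegrable a b) hpointwise
    _ ≤ greenSolution r q f T x := by
        rw [greenSolution]
        gcongr
        exact intervalIntegral.integral_mono_interval hxa hab hbT
          (.of_forall fun t => mul_nonneg (exp_pos _).le (div_nonneg (hf0 t) (hrpos t).le))
          (hg.intervalIntegrable x T)

end GreenSolution

theorem eq_zero_of_sub_eq_integral_mul {w z : ℝ → ℝ} (hw : LocallyIntegrable w volume)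
    (hw0 : ∀ t, 0 ≤ w t) (hz : Continuous z) (hzw : ∀ a b, z b - z a = ∫ t in a..b, w t * z t)
    (hz0 : Tendsto z atTop (nhds 0)) : z = 0 := by
  set Q : ℝ → ℝ := fun x => ∫ t in (0:ℝ)..x, w t
  set v : ℝ → ℝ := fun x => exp (-Q x) * z x
  have hwz : LocallyIntegrable (fun t => w t * z t) volume := hw.mul_continuous hz
  have hv : ∀ x, v x = v 0 := fun x => by
    have hvx := ((hw.absolutelyContinuousOnInterval_intervalIntegral 0 0 x).contDiff_comp
      (f := Q) (g := fun s => exp (-s)) (by fun_prop)).fun_mul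
      (absolutelyContinuousOnInterval_of_sub_eq_integral hwz hzw 0 x)
      |>.integral_eq_sub_of_ae_hasDerivAt (φ := 0) ?_
    · simpa [sub_eq_zero] using hvx.symm
    filter_upwards [_root_.LocallyIntegrable.ae_hasDerivAt_integral hw,
      ae_hasDerivAt_of_sub_eq_integral hwz hzw] with t hQt hzt _
    exact ((hQt 0).neg.exp.mul hzt).congr_deriv (by simp only [Pi.zero_apply]; ring)
  have hv0 : Tendsto v atTop (nhds 0) := by
    refine squeeze_zero_norm' ?_ (tendsto_zero_iff_norm_tendsto_zero.mp hz0)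
    filter_upwards [eventually_ge_atTop 0] with x hx
    have hQx : 0 ≤ Q x := intervalIntegral.integral_nonneg hx fun t _ => hw0 t
    rw [norm_mul, Real.norm_of_nonneg (exp_pos _).le]
    exact mul_le_of_le_one_left (norm_nonneg _) (exp_le_one_iff.mpr (by linarith))
  have hv00 : v 0 = 0 := tendsto_nhds_unique (tendsto_const_nhds.congr fun x => (hv x).symm) hv0
  funext x
  simpa [v, hv00, (exp_pos _).ne'] using hv x

theorem IsSolution.unique {r q f y₁ y₂ : ℝ → ℝ}
    (hw : LocallyIntegrable (fun t => q t / r t) volume) (hw0 : ∀ t, 0 ≤ q t / r t)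
    (hf : LocallyIntegrable (fun t => f t / r t) volume)
    (h₁ : IsSolution r q f y₁) (h₂ : IsSolution r q f y₂) : y₁ = y₂ := by
  have hint : ∀ y, Continuous y → ∀ a b,
      IntervalIntegrable (fun t => (q t * y t - f t) / r t) volume a b := fun y hy a b => by
    convert ((hw.mul_continuous hy).sub hf).intervalIntegrable a b using 1
    ext t; simp only [Pi.sub_apply]; ring
  refine sub_eq_zero.mp (eq_zero_of_sub_eq_integral_mul hw hw0 (h₁.1.sub h₂.1) (fun a b => ?_)
    (by rw [← sub_self 0]; exact h₁.2.2.2.sub h₂.2.2.2))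
  rw [Pi.sub_apply, Pi.sub_apply, sub_sub_sub_comm, h₁.2.1, h₂.2.1,
    ← intervalIntegral.integral_sub (hint y₁ h₁.1 a b) (hint y₂ h₂.1 a b)]
  congr 1; ext t; simp only [Pi.sub_apply]; ring

theorem exists_q_le_on_dfun_window {r q : ℝ → ℝ}
    (hw : LocallyIntegrable (fun t => q t / r t) volume) (hw0 : ∀ t, 0 ≤ q t / r t)
    (hS1 : S1E r q = ⊤) (hS2 : S2E r q = ⊤)
    (hq0 : Tendsto q atBot (nhds 0) ∨ Tendsto q atTop (nhds 0)) {ε : ℝ} (hε : 0 < ε) :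
    ∃ x₀, ∀ t ∈ Icc (x₀ - dfun r q x₀) (x₀ + dfun r q x₀), q t ≤ ε := by
  have hQ := monotone_potential hw hw0
  rcases hq0 with hq0 | hq0
  · obtain ⟨M, hM⟩ := eventually_atBot.mp (hq0.eventually (ge_mem_nhds hε))
    obtain ⟨x₀, hx₀⟩ := ((tendsto_potential_atBot hw hw0 hS1).eventually
      (eventually_lt_atBot (potential r q M - 2))).exists
    obtain ⟨hd₀, h2⟩ := dfun_pos_and_potential_sub_eq_two hw hw0 hS2 x₀
    refine ⟨x₀, fun t ht => hM t (ht.2.trans ?_)⟩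
    by_contra! hlt
    linarith [hQ hlt.le, hQ (by linarith : x₀ - dfun r q x₀ ≤ x₀)]
  · obtain ⟨M, hM⟩ := eventually_atTop.mp (hq0.eventually (ge_mem_nhds hε))
    obtain ⟨x₀, hx₀⟩ := ((tendsto_potential_atTop hw hw0 hS2).eventually
      (eventually_gt_atTop (potential r q M + 2))).exists
    obtain ⟨hd₀, h2⟩ := dfun_pos_and_potential_sub_eq_two hw hw0 hS2 x₀
    refine ⟨x₀, fun t ht => hM t (le_trans ?_ ht.1)⟩
    by_contra! hlt
    linarith [hQ hlt.le, hQ (by linarith : x₀ ≤ x₀ + dfun r q x₀)]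

theorem le_greenSolution_of_dfun_window {r q f : ℝ → ℝ} {T : ℝ} (hrpos : ∀ x, 0 < r x)
    (hw : LocallyIntegrable (fun t => q t / r t) volume) (hw0 : ∀ t, 0 ≤ q t / r t)
    (hS2 : S2E r q = ⊤) (hf : LocallyIntegrable (fun t => f t / r t) volume)
    (hf0 : ∀ t, 0 ≤ f t) {x₀ ε : ℝ} (hε : 0 < ε)
    (hqε : ∀ t ∈ Icc (x₀ - dfun r q x₀) (x₀ + dfun r q x₀), q t ≤ ε)
    (hf1 : ∀ t ∈ Ioc (x₀ - dfun r q x₀) (x₀ + dfun r q x₀), 1 ≤ f t)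
    (hT : x₀ + dfun r q x₀ ≤ T) {x : ℝ}
    (hx : x ∈ Icc (x₀ - dfun r q x₀ - dfun r q (x₀ - dfun r q x₀)) (x₀ - dfun r q x₀)) :
    exp (-4) * (2 / ε) ≤ greenSolution r q f T x := by
  set a := x₀ - dfun r q x₀
  have hQ := monotone_potential hw hw0
  obtain ⟨hd₀, h₀⟩ := dfun_pos_and_potential_sub_eq_two hw hw0 hS2 x₀
  obtain ⟨hda, ha⟩ := dfun_pos_and_potential_sub_eq_two hw hw0 hS2 a
  refine le_trans ?_ (le_greenSolution hrpos hw hw0 hf hf0 hε hf1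
    (fun t ht => hqε t (Ioc_subset_Icc_self ht)) hx.2 (by linarith) hT)
  rw [h₀]
  gcongr
  linarith [hQ hx.1, hQ (by linarith : a ≤ a + dfun r q a)]

theorem not_correctlySolvableC {r q : ℝ → ℝ} (hr : Continuous r) (hrpos : ∀ x, 0 < r x)
    (hq : LocallyIntegrable q volume) (hqnn : ∀ x, 0 ≤ q x)
    (hS1 : S1E r q = ⊤) (hS2 : S2E r q = ⊤)
    (hq0 : Tendsto q atBot (nhds 0) ∨ Tendsto q atTop (nhds 0)) :
    ¬ CorrectlySolvableC r q := by
  rintro ⟨c, hc, hsolv⟩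
  have hw := hq.div_continuous hr fun x => (hrpos x).ne'
  have hw0 t : 0 ≤ q t / r t := div_nonneg (hqnn t) (hrpos t).le
  set ε := 2 * exp (-4) / (c + 1)
  have hε : 0 < ε := by positivity
  obtain ⟨x₀, hx₀⟩ := exists_q_le_on_dfun_window hw hw0 hS1 hS2 hq0 hε
  set a := x₀ - dfun r q x₀
  set b := x₀ + dfun r q x₀
  obtain ⟨f, hf0, hf1, hf01⟩ := exists_continuous_zero_one_of_isClosed
    (isClosed_Iic.union isClosed_Ici) isClosed_Icc
    (s := Iic (a - 1) ∪ Ici (b + 1)) (t := Icc a b) <| disjoint_left.mpr fun t ht ht' => by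
      rcases ht with ht | ht <;> simp only [mem_Iic, mem_Ici] at ht <;> linarith [ht'.1, ht'.2]
  have hfr := f.continuous.locallyIntegrable.div_continuous hr fun x => (hrpos x).ne'
  have hy := greenSolution_isSolution (T := b + 1) hw hw0 hS1 hfr
    (fun t ht => hf0 (Or.inl ht)) (fun t ht => hf0 (Or.inr (le_of_lt ht)))
  have hya := le_greenSolution_of_dfun_window (T := b + 1) hrpos hw hw0 hS2 hfr
    (fun t => (hf01 t).1) hε hx₀ (fun t ht => (hf1 (Ioc_subset_Icc_self ht)).ge) (by linarith)
    (⟨by linarith [(dfun_pos_and_potential_sub_eq_two hw hw0 hS2 a).1], le_rfl⟩ :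
      a ∈ Icc (a - dfun r q a) a)
  have hf1' t : |f t| ≤ 1 := abs_le.mpr ⟨by linarith [(hf01 t).1], (hf01 t).2⟩
  have hsup : ⨆ t, |f t| ≤ 1 := ciSup_le hf1'
  have := (hsolv f f.continuous ⟨1, hf1'⟩).2 _ hy a
  have h2 : exp (-4) * (2 / ε) = c + 1 := by simp only [ε]; field_simp
  nlinarith [le_abs_self (greenSolution r q f (b + 1) a)]

theorem not_correctlySolvableLp {r q : ℝ → ℝ} (hr : Continuous r) (hrpos : ∀ x, 0 < r x)
    (hq : LocallyIntegrable q volume) (hqnn : ∀ x, 0 ≤ q x)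
    (hS1 : S1E r q = ⊤) (hS2 : S2E r q = ⊤) {δ : ℝ} (hδ : 0 < δ)
    (hd : ∀ x t : ℝ, |t - x| ≤ dfun r q x → δ * dfun r q x ≤ dfun r q t)
    (hq0 : Tendsto q atBot (nhds 0) ∨ Tendsto q atTop (nhds 0))
    {p : ℝ≥0∞} (hp1 : 1 ≤ p) (hp : p ≠ ⊤) : ¬ CorrectlySolvableLp r q p := by
  rintro ⟨c, -, hc, hsolv⟩
  have hw := hq.div_continuous hr fun x => (hrpos x).ne'
  have hw0 t : 0 ≤ q t / r t := div_nonneg (hqnn t) (hrpos t).le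
  have hδ1 : δ ≤ 1 := by
    have hd0 := (dfun_pos_and_potential_sub_eq_two hw hw0 hS2 0).1
    nlinarith [hd 0 0 (by simpa using hd0.le)]
  set ε := exp (-4) * δ / (c.toReal + 1)
  have hε : 0 < ε := by positivity
  obtain ⟨x₀, hx₀⟩ := exists_q_le_on_dfun_window hw hw0 hS1 hS2 hq0 hε
  obtain ⟨hd₀, -⟩ := dfun_pos_and_potential_sub_eq_two hw hw0 hS2 x₀
  set a := x₀ - dfun r q x₀
  set b := x₀ + dfun r q x₀
  set f : ℝ → ℝ := (Ioc a b).indicator fun _ => 1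
  have hfLp : MemLp f p volume := memLp_indicator_const p measurableSet_Ioc 1 (by simp)
  have hfr : LocallyIntegrable (fun t => f t / r t) volume :=
    ((memLp_one_iff_integrable.mp (memLp_indicator_const 1 measurableSet_Ioc 1 (by simp))
      ).locallyIntegrable).div_continuous hr fun x => (hrpos x).ne'
  have hf0 t : 0 ≤ f t := indicator_nonneg (fun _ _ => zero_le_one) t
  have hy := greenSolution_isSolution (T := b) hw hw0 hS1 hfr
    (fun t ht => indicator_of_notMem (fun h => h.1.not_ge ht) _)
    (fun t ht => indicator_of_notMem (fun h => h.2.not_gt ht) _)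
  obtain ⟨⟨y, ⟨hy', hyLp⟩, -⟩, hbound⟩ := hsolv f hfLp
  rw [IsSolution.unique hw hw0 hfr hy' hy] at hyLp
  have hlow := ofReal_mul_eLpNorm_indicator_one_le (μ := volume) hp1 hp measurableSet_Ioc
    measurableSet_Icc (by positivity : 0 ≤ δ / 2) (by linarith) (by positivity)
    (s := Ioc a b) (t := Icc (a - dfun r q a) a) ?_ fun x hx =>
      (le_greenSolution_of_dfun_window hrpos hw hw0 hS2 hfr hf0 hε hx₀
        (fun t ht => (indicator_of_mem ht fun _ => (1:ℝ)).ge) le_rfl hx).trans (le_abs_self _)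
  · have hN : eLpNorm f p volume ≠ 0 := by
      simp [f, eLpNorm_indicator_const measurableSet_Ioc (zero_lt_one.trans_le hp1).ne' hp,
        (by linarith : a < b).not_ge]
    have := (ENNReal.mul_le_mul_iff_left hN hfLp.eLpNorm_ne_top).mp
      (hlow.trans (hbound _ hy hyLp))
    rw [ENNReal.ofReal_le_iff_le_toReal hc.ne] at this
    have h2 : δ / 2 * (exp (-4) * (2 / ε)) = c.toReal + 1 := by simp only [ε]; field_simp
    linarith
  · rw [Real.volume_Ioc, Real.volume_Icc, ← ENNReal.ofReal_mul (by positivity)]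
    exact ENNReal.ofReal_le_ofReal (by nlinarith [hd x₀ a (by simp [a, abs_of_pos hd₀])])

theorem stmt18 (r q : ℝ → ℝ) (hr : Continuous r) (hrpos : ∀ x, 0 < r x)
    (hq : LocallyIntegrable q volume) (hqnn : ∀ x, 0 ≤ q x)
    (hS1 : S1E r q = ⊤) (hS2 : S2E r q = ⊤)
    (δ : ℝ) (hδ : 0 < δ)
    (hd : ∀ x t : ℝ, |t - x| ≤ dfun r q x → δ * dfun r q x ≤ dfun r q t)
    (hq0 : Tendsto q atBot (nhds 0) ∨ Tendsto q atTop (nhds 0)) :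
    ∀ p : ℝ≥0∞, 1 ≤ p →
      (p ≠ ⊤ → ¬ CorrectlySolvableLp r q p) ∧
      (p = ⊤ → ¬ CorrectlySolvableC r q) :=
  fun _ hp1 =>
    ⟨fun hp => not_correctlySolvableLp hr hrpos hq hqnn hS1 hS2 hδ hd hq0 hp1 hp,
      fun _ => not_correctlySolvableC hr hrpos hq hqnn hS1 hS2 hq0⟩
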